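/- arXiv:2604.09469 — 5 statements merged into one kernel-verified Lean document; each statement's English description precedes it below -/
import Mathlib

section
/- Let f, g : [1,∞) → [0,∞) be nondecreasing functions such that g(x) → ∞ as x → ∞ and f(x)/g(x) → α as x → ∞. For real s > 1 set F(s) = s·∫₁^∞ f(x)·x^{−s−1} dx and G(s) = s·∫₁^∞ g(x)·x^{−s−1} dx, and assume that for every s > 1 both integrals are finite. Assume moreover that G(s) → ∞ as s → 1⁺. Then F(s)/G(s) → α as s → 1⁺. -/
/-!
Write `h = f - α g`. Past some `X` we have `|h| ≤ ε g`, while on `[1, X)` monotonicity bounds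
`|h|` by a constant `M`; since the kernel `x ^ (-s - 1)` lies in `[0, 1]` on `[1, ∞)`, this gives
`|F(s) - α G(s)| ≤ 2 M (X - 1) + ε G(s)` for `1 < s < 2`. Dividing by `G(s) → ∞` kills the
constant.
-/

open MeasureTheory Filter Set Topology

theorem abs_setIntegral_mul_rpow_le {h g : ℝ → ℝ} {p M ε X : ℝ} (hp : p ≤ 0) (hX : 1 ≤ X)
    (hε : 0 ≤ ε) (hg : IntegrableOn (fun x => g x * x ^ p) (Ici 1)) (hg0 : ∀ x ∈ Ici 1, 0 ≤ g x)
    (hhead : ∀ x ∈ Ico 1 X, |h x| ≤ M) (htail : ∀ x ∈ Ici X, |h x| ≤ ε * g x) :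
    |∫ x in Ici 1, h x * x ^ p| ≤ M * (X - 1) + ε * ∫ x in Ici 1, g x * x ^ p := by
  have hpt : ∀ x ∈ Ici (1 : ℝ),
      ‖h x * x ^ p‖ ≤ (Ico 1 X).indicator (fun _ => M) x + ε * (g x * x ^ p) := by
    intro x (hx : 1 ≤ x)
    have hw0 : 0 ≤ x ^ p := Real.rpow_nonneg (by linarith) p
    have hw1 : x ^ p ≤ 1 := Real.rpow_le_one_of_one_le_of_nonpos hx hp
    rw [Real.norm_eq_abs, abs_mul, abs_of_nonneg hw0]
    rcases lt_or_ge x X with hxX | hXx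
    · rw [indicator_of_mem (show x ∈ Ico 1 X from ⟨hx, hxX⟩)]
      have := hhead x ⟨hx, hxX⟩
      nlinarith [abs_nonneg (h x), mul_nonneg hε (mul_nonneg (hg0 x hx) hw0)]
    · rw [indicator_of_notMem fun hmem => hmem.2.not_ge hXx]
      nlinarith [htail x hXx]
  have hind : IntegrableOn ((Ico 1 X).indicator fun _ => M) (Ici 1) :=
    ((integrable_indicator_iff measurableSet_Ico).2
      (integrableOn_const (C := M) measure_Ico_lt_top.ne)).integrableOn
  have hind_eq : ∫ x in Ici 1, (Ico 1 X).indicator (fun _ => M) x = M * (X - 1) := by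
    rw [setIntegral_indicator measurableSet_Ico, inter_eq_right.mpr Ico_subset_Ici_self,
      setIntegral_const, Real.volume_real_Ico_of_le hX, smul_eq_mul, mul_comm]
  calc |∫ x in Ici 1, h x * x ^ p|
      ≤ ∫ x in Ici 1, ((Ico 1 X).indicator (fun _ => M) x + ε * (g x * x ^ p)) :=
        norm_integral_le_of_norm_le (hind.add (hg.const_mul ε))
          ((ae_restrict_iff' measurableSet_Ici).2 (ae_of_all _ hpt))
    _ = M * (X - 1) + ε * ∫ x in Ici 1, g x * x ^ p := by
        rw [integral_add hind (hg.const_mul ε), integral_const_mul, hind_eq]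

theorem abs_sub_mul_le_of_monotoneOn {f g : ℝ → ℝ} {α x X : ℝ}
    (hf0 : ∀ x ∈ Ici (1 : ℝ), 0 ≤ f x) (hg0 : ∀ x ∈ Ici (1 : ℝ), 0 ≤ g x)
    (hfmono : MonotoneOn f (Ici 1)) (hgmono : MonotoneOn g (Ici 1)) (hx : x ∈ Icc 1 X) :
    |f x - α * g x| ≤ f X + |α| * g X := by
  have hX : X ∈ Ici (1 : ℝ) := hx.1.trans hx.2
  calc |f x - α * g x| ≤ |f x| + |α| * |g x| := (abs_sub _ _).trans_eq (by rw [abs_mul])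
    _ ≤ f X + |α| * g X := by
        rw [abs_of_nonneg (hf0 x hx.1), abs_of_nonneg (hg0 x hx.1)]
        gcongr
        exacts [hfmono hx.1 hX hx.2, hgmono hx.1 hX hx.2]

theorem eventually_abs_sub_mul_le_mul {ι : Type*} {l : Filter ι} {f g : ι → ℝ} {α ε : ℝ}
    (hg : ∀ᶠ i in l, 0 < g i) (hratio : Tendsto (fun i => f i / g i) l (𝓝 α)) (hε : 0 < ε) :
    ∀ᶠ i in l, |f i - α * g i| ≤ ε * g i := by
  filter_upwards [hg, hratio (Metric.closedBall_mem_nhds α hε)] with i hgi hi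
  rw [mem_preimage, Metric.mem_closedBall, Real.dist_eq] at hi
  have hfactor : f i - α * g i = (f i / g i - α) * g i := by field_simp
  rw [hfactor, abs_mul, abs_of_pos hgi]
  gcongr

theorem tendsto_div_of_forall_abs_sub_mul_le {ι : Type*} {l : Filter ι} {F G : ι → ℝ} {α : ℝ}
    (hG : Tendsto G l atTop) (h : ∀ ε > 0, ∃ C, ∀ᶠ i in l, |F i - α * G i| ≤ C + ε * G i) :
    Tendsto (fun i => F i / G i) l (𝓝 α) := by
  rw [Metric.tendsto_nhds]
  intro ε hε
  obtain ⟨C, hC⟩ := h (ε / 2) (half_pos hε)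
  have hCG : Tendsto (fun i => C / G i) l (𝓝 0) := tendsto_const_nhds.div_atTop hG
  filter_upwards [hC, hG.eventually_gt_atTop 0, hCG.eventually (gt_mem_nhds (half_pos hε))]
    with i hi hGi hCi
  rw [div_lt_iff₀ hGi] at hCi
  rw [Real.dist_eq, div_sub' hGi.ne', abs_div, abs_of_pos hGi, div_lt_iff₀ hGi, mul_comm (G i) α]
  linarith

/-- **Abelian theorem for Mellin (Laplace–Stieltjes) transforms.**
If `f, g : [1,∞) → [0,∞)` are nondecreasing, `g(x) → ∞`, and `f(x)/g(x) → α`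
as `x → ∞`, then for `F(s) = s·∫₁^∞ f(x)·x^{-s-1} dx` and
`G(s) = s·∫₁^∞ g(x)·x^{-s-1} dx` (assumed finite for all `s > 1`),
assuming `G(s) → ∞` as `s → 1⁺`, one has `F(s)/G(s) → α` as `s → 1⁺`. -/
theorem stmt0 (f g : ℝ → ℝ) (α : ℝ)
    (hf0 : ∀ x ∈ Set.Ici (1 : ℝ), 0 ≤ f x)
    (hg0 : ∀ x ∈ Set.Ici (1 : ℝ), 0 ≤ g x)
    (hfmono : MonotoneOn f (Set.Ici 1))
    (hgmono : MonotoneOn g (Set.Ici 1))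
    (hginf : Filter.Tendsto g Filter.atTop Filter.atTop)
    (hratio : Filter.Tendsto (fun x => f x / g x) Filter.atTop (nhds α))
    (hfint : ∀ s : ℝ, 1 < s →
      MeasureTheory.IntegrableOn (fun x : ℝ => f x * x ^ (-s - 1)) (Set.Ici 1))
    (hgint : ∀ s : ℝ, 1 < s →
      MeasureTheory.IntegrableOn (fun x : ℝ => g x * x ^ (-s - 1)) (Set.Ici 1))
    (hGinf : Filter.Tendsto
      (fun s : ℝ => s * ∫ x in Set.Ici (1 : ℝ), g x * x ^ (-s - 1))
      (nhdsWithin 1 (Set.Ioi 1)) Filter.atTop) :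
    Filter.Tendsto
      (fun s : ℝ =>
        (s * ∫ x in Set.Ici (1 : ℝ), f x * x ^ (-s - 1)) /
        (s * ∫ x in Set.Ici (1 : ℝ), g x * x ^ (-s - 1)))
      (nhdsWithin 1 (Set.Ioi 1)) (nhds α) := by
  refine tendsto_div_of_forall_abs_sub_mul_le hGinf fun ε hε => ?_
  obtain ⟨X, hXε, hX1⟩ := ((eventually_forall_ge_atTop.2 <|
    eventually_abs_sub_mul_le_mul (hginf.eventually_gt_atTop 0) hratio hε).and
      (eventually_ge_atTop 1)).exists
  set M := f X + |α| * g X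
  have hM : 0 ≤ M * (X - 1) :=
    mul_nonneg (add_nonneg (hf0 X hX1) (mul_nonneg (abs_nonneg α) (hg0 X hX1))) (sub_nonneg.2 hX1)
  refine ⟨2 * (M * (X - 1)), ?_⟩
  filter_upwards [Ioo_mem_nhdsGT one_lt_two] with s ⟨hs1, hs2⟩
  have hbound := abs_setIntegral_mul_rpow_le (h := fun x => f x - α * g x)
    (by linarith : -s - 1 ≤ 0) hX1 hε.le (hgint s hs1) hg0
    (fun x hx => abs_sub_mul_le_of_monotoneOn hf0 hg0 hfmono hgmono ⟨hx.1, hx.2.le⟩) hXε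
  have hG0 : 0 ≤ ∫ x in Ici 1, g x * x ^ (-s - 1) :=
    setIntegral_nonneg measurableSet_Ici fun x hx =>
      mul_nonneg (hg0 x hx) (Real.rpow_nonneg (zero_le_one.trans hx) _)
  have hlin : (s * ∫ x in Ici 1, f x * x ^ (-s - 1)) - α * (s * ∫ x in Ici 1, g x * x ^ (-s - 1))
      = s * ∫ x in Ici 1, (f x - α * g x) * x ^ (-s - 1) := by
    simp_rw [sub_mul, mul_assoc]
    rw [integral_sub (hfint s hs1) ((hgint s hs1).const_mul α), integral_const_mul]
    ring
  rw [hlin, abs_mul, abs_of_pos (by linarith : 0 < s)]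
  calc s * |∫ x in Ici 1, (f x - α * g x) * x ^ (-s - 1)|
      ≤ s * (M * (X - 1) + ε * ∫ x in Ici 1, g x * x ^ (-s - 1)) := by gcongr
    _ ≤ 2 * (M * (X - 1)) + ε * (s * ∫ x in Ici 1, g x * x ^ (-s - 1)) := by nlinarith
end

section
/- Let S be a set of prime numbers and let α ∈ ℝ. For real x ≥ 2 define π(x) = #{p prime : p ≤ x}, π_S(x) = #{p ∈ S : p ≤ x}, the Chebyshev function ψ(x) = Σ_{p prime} Σ_{k ≥ 1, p^k ≤ x} log p, and ψ_S(x) = Σ_{p ∈ S} Σ_{k ≥ 1, p^k ≤ x} log p. If π_S(x)/π(x) → α as x → ∞, then ψ_S(x)/ψ(x) → α as x → ∞. -/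
/-- The prime-counting function `π(x) = #{p prime : p ≤ x}`. -/
noncomputable def primePi (x : ℝ) : ℕ := {p : ℕ | p.Prime ∧ (p : ℝ) ≤ x}.ncard

/-- The counting function of a set `S` of primes: `π_S(x) = #{p ∈ S : p ≤ x}`. -/
noncomputable def primePiOf (S : Set ℕ) (x : ℝ) : ℕ := {p : ℕ | p ∈ S ∧ (p : ℝ) ≤ x}.ncard

open Classical in
/-- The Chebyshev function `ψ(x) = Σ_{p prime} Σ_{k ≥ 1, p^k ≤ x} log p`. -/
noncomputable def chebyshevPsi (x : ℝ) : ℝ :=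
  ∑' p : ℕ, ∑' k : ℕ, if p.Prime ∧ 1 ≤ k ∧ ((p : ℝ)) ^ k ≤ x then Real.log p else 0

open Classical in
/-- The partial Chebyshev function `ψ_S(x) = Σ_{p ∈ S} Σ_{k ≥ 1, p^k ≤ x} log p`. -/
noncomputable def chebyshevPsiOf (S : Set ℕ) (x : ℝ) : ℝ :=
  ∑' p : ℕ, ∑' k : ℕ, if p ∈ S ∧ 1 ≤ k ∧ ((p : ℝ)) ^ k ≤ x then Real.log p else 0

/-!
A prime `p ≤ x` contributes `⌊log_p x⌋ · log p ≤ log x` to `ψ_S(x)`, and at least `log y` when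
`y < p`; hence `(π_S(x) - π_S(y)) log y ≤ ψ_S(x) ≤ π_S(x) log x`, and likewise for all primes.
Take `y = x / log² x`. Then `log y / log x → 1`, and Chebyshev's lower bound `π(x) ≫ x / log x`
gives `π(y) = o(π(x))`, so these bounds squeeze `ψ_S(x) / ψ(x)` between two quantities that are
`π_S(x) / π(x) · (1 + o(1)) + o(1)`.
-/

open Real Finset Filter Topology

theorem chebyshevPsi_eq_chebyshevPsiOf : chebyshevPsi = chebyshevPsiOf {p | p.Prime} := by
  ext x
  unfold chebyshevPsi chebyshevPsiOf
  -- not `rfl`: the two `if`s carry different `Decidable` instances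
  congr! 5

theorem primePi_eq_primePiOf : primePi = primePiOf {p | p.Prime} := rfl

theorem one_le_and_pow_le_iff_mem_Icc {p k : ℕ} (hp : 1 < p) {x : ℝ} :
    1 ≤ k ∧ (p : ℝ) ^ k ≤ x ↔ k ∈ Icc 1 (Nat.log p ⌊x⌋₊) := by
  rw [mem_Icc, and_congr_right_iff]
  intro hk
  have hn : p ^ k ≠ 0 := by positivity
  rw [← Nat.cast_pow, ← Nat.le_floor_iff' hn]
  rcases eq_or_ne ⌊x⌋₊ 0 with h0 | h0
  · simp [h0]; omega
  · exact (Nat.le_log_iff_pow_le hp h0).symm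

open Classical in
theorem tsum_ite_one_le_and_pow_le (S : Set ℕ) (p : ℕ) (x : ℝ) :
    ∑' k : ℕ, (if p ∈ S ∧ 1 ≤ k ∧ (p : ℝ) ^ k ≤ x then log p else 0)
      = if p ∈ S then Nat.log p ⌊x⌋₊ * log p else 0 := by
  by_cases hpS : p ∈ S
  swap; · simp [hpS]
  rcases le_or_gt p 1 with hp | hp
  · have : log p = 0 := by interval_cases p <;> simp
    simp [this]
  simp only [hpS, true_and, if_true, one_le_and_pow_le_iff_mem_Icc hp]
  rw [tsum_eq_sum (s := Icc 1 (Nat.log p ⌊x⌋₊)) (fun k hk => if_neg hk), sum_ite_mem, inter_self,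
    sum_const, Nat.card_Icc, nsmul_eq_mul, Nat.add_sub_cancel]

open Classical in
theorem chebyshevPsiOf_eq_sum (S : Set ℕ) (x : ℝ) :
    chebyshevPsiOf S x = ∑ p ∈ range (⌊x⌋₊ + 1) with p ∈ S, Nat.log p ⌊x⌋₊ * log p := by
  rw [chebyshevPsiOf, tsum_congr (tsum_ite_one_le_and_pow_le S · x), sum_filter]
  refine tsum_eq_sum fun p hp => ?_
  rw [mem_range, not_lt] at hp
  simp [Nat.log_of_lt (Nat.lt_of_add_one_le hp)]

open Classical in
theorem primePiOf_eq_card (S : Set ℕ) {x : ℝ} (hx : 0 ≤ x) :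
    primePiOf S x = #{p ∈ range (⌊x⌋₊ + 1) | p ∈ S} := by
  rw [primePiOf, ← Set.ncard_coe_finset]
  congr 1
  ext p
  simp [Nat.le_floor_iff hx, and_comm]

theorem primePi_eq_primeCounting {x : ℝ} (hx : 0 ≤ x) : primePi x = Nat.primeCounting ⌊x⌋₊ := by
  rw [primePi_eq_primePiOf, primePiOf_eq_card _ hx, ← Nat.primesLE_card_eq_primeCounting,
    Nat.primesLE_eq_filter_range]
  simp only [Set.mem_ofPred_eq]

theorem natLog_mul_log_le (b n : ℕ) : Nat.log b n * log b ≤ log n := by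
  rcases le_or_gt b 1 with hb | hb
  · simp [Nat.log_of_left_le_one hb, log_natCast_nonneg]
  rw [← le_div_iff₀ (log_pos (by exact_mod_cast hb)), log_div_log]
  exact natLog_le_logb n b

theorem chebyshevPsiOf_nonneg (S : Set ℕ) (x : ℝ) : 0 ≤ chebyshevPsiOf S x := by
  rw [chebyshevPsiOf_eq_sum]
  exact sum_nonneg fun p _ => mul_nonneg (Nat.cast_nonneg _) (log_natCast_nonneg p)

theorem chebyshevPsiOf_le_primePiOf_mul_log (S : Set ℕ) {x : ℝ} (hx : 1 ≤ x) :
    chebyshevPsiOf S x ≤ primePiOf S x * log x := by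
  rw [chebyshevPsiOf_eq_sum, primePiOf_eq_card S (by linarith), ← nsmul_eq_mul]
  refine sum_le_card_nsmul _ _ _ fun p _ => (natLog_mul_log_le p _).trans ?_
  exact log_le_log (by exact_mod_cast Nat.floor_pos.mpr hx) (Nat.floor_le (by linarith))

open Classical in
theorem primePiOf_sub_mul_log_le (S : Set ℕ) {x y : ℝ} (hy : 1 ≤ y) (hyx : y ≤ x) :
    ((primePiOf S x : ℝ) - primePiOf S y) * log y ≤ chebyshevPsiOf S x := by
  set A := {p ∈ range (⌊x⌋₊ + 1) | p ∈ S}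
  set B := {p ∈ range (⌊y⌋₊ + 1) | p ∈ S}
  have hBA : B ⊆ A := filter_subset_filter _ (range_subset_range.mpr (by gcongr))
  have hlog : ∀ p ∈ A \ B, log y ≤ Nat.log p ⌊x⌋₊ * log p := by
    intro p hp
    obtain ⟨hpA, hpB⟩ := mem_sdiff.mp hp
    simp only [A, B, mem_filter, mem_range, Nat.lt_add_one_iff, not_and', not_le] at hpA hpB
    have hyp : y < p := Nat.lt_of_floor_lt (hpB hpA.2)
    have hp1 : 1 < p := by exact_mod_cast hy.trans_lt hyp
    have hlogp : 1 ≤ Nat.log p ⌊x⌋₊ := Nat.le_log_of_pow_le hp1 (by simpa using hpA.1)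
    calc log y ≤ log p := log_le_log (by linarith) hyp.le
      _ = 1 * log p := (one_mul _).symm
      _ ≤ Nat.log p ⌊x⌋₊ * log p := by gcongr; exact_mod_cast hlogp
  rw [primePiOf_eq_card S (by linarith), primePiOf_eq_card S (by linarith),
    ← Nat.cast_sub (card_le_card hBA), ← card_sdiff_of_subset hBA, ← nsmul_eq_mul,
    chebyshevPsiOf_eq_sum]
  exact (card_nsmul_le_sum _ _ _ hlog).trans (sum_le_sum_of_subset_of_nonneg sdiff_subset
    fun p _ _ => mul_nonneg (Nat.cast_nonneg _) (log_natCast_nonneg p))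

theorem primePiOf_mono {S T : Set ℕ} (hST : S ⊆ T) {x : ℝ} (hx : 0 ≤ x) :
    primePiOf S x ≤ primePiOf T x := by
  classical
  rw [primePiOf_eq_card S hx, primePiOf_eq_card T hx]
  exact card_le_card (monotone_filter_right _ fun p _ hp => hST hp)

theorem primePi_le_self {x : ℝ} (hx : 0 ≤ x) : (primePi x : ℝ) ≤ x := by
  rw [primePi_eq_primeCounting hx, ← Nat.primesLE_card_eq_primeCounting,
    Nat.primesLE_eq_filter_Icc_one]
  calc (#{p ∈ Icc 1 ⌊x⌋₊ | p.Prime} : ℝ) ≤ #(Icc 1 ⌊x⌋₊) := by exact_mod_cast card_filter_le _ _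
    _ = ⌊x⌋₊ := by simp
    _ ≤ x := Nat.floor_le hx

theorem eventually_mul_div_log_le_primePi :
    ∀ᶠ x : ℝ in atTop, log 2 / 2 * x / log x ≤ primePi x := by
  have hlog2 : 0 < log 2 := log_pos one_lt_two
  filter_upwards [isLittleO_log_id_atTop.bound (div_pos hlog2 four_pos), eventually_ge_atTop 8]
    with x hlogx hx
  rw [norm_of_nonneg (log_nonneg (by linarith)), id, norm_of_nonneg (by linarith)] at hlogx
  have hlogx2 : log (x + 2) ≤ log 2 + log x := by
    rw [← log_mul two_ne_zero (by linarith)]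
    exact log_le_log (by linarith) (by linarith)
  have hlogx_pos : 0 < log x := log_pos (by linarith)
  rw [primePi_eq_primeCounting (by linarith)]
  refine le_trans ?_ (Chebyshev.pi_ge' (by linarith))
  gcongr
  nlinarith

theorem tendsto_log_div_log_sq_div_log :
    Tendsto (fun x => log (x / log x ^ 2) / log x) atTop (𝓝 1) := by
  have hloglog : Tendsto (fun x => log (log x) / log x) atTop (𝓝 0) :=
    isLittleO_log_id_atTop.tendsto_div_nhds_zero.comp tendsto_log_atTop
  have := (hloglog.const_mul 2).const_sub 1
  rw [mul_zero, sub_zero] at this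
  refine this.congr' ?_
  filter_upwards [eventually_gt_atTop 1] with x hx
  have hlogx : 0 < log x := log_pos hx
  rw [log_div (by linarith) (by positivity), log_pow]
  field_simp
  push_cast
  ring

theorem eventually_one_lt_div_log_sq_le_self :
    ∀ᶠ x : ℝ in atTop, 1 < x / log x ^ 2 ∧ x / log x ^ 2 ≤ x := by
  filter_upwards [(isLittleO_pow_log_id_atTop (n := 2)).bound one_half_pos,
    tendsto_log_atTop.eventually_ge_atTop 1, eventually_gt_atTop 0] with x hlogx hlogx1 hx
  rw [norm_of_nonneg (by positivity), id, norm_of_nonneg hx.le] at hlogx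
  have hlogx_sq : 1 ≤ log x ^ 2 := one_le_pow₀ hlogx1
  constructor
  · rw [one_lt_div (by positivity)]
    linarith
  · exact div_le_self hx.le hlogx_sq

theorem tendsto_primePi_div_log_sq_div_primePi :
    Tendsto (fun x => (primePi (x / log x ^ 2) : ℝ) / primePi x) atTop (𝓝 0) := by
  have hlog2 : 0 < log 2 := log_pos one_lt_two
  have hbound : Tendsto (fun x => 2 / log 2 * (log x)⁻¹) atTop (𝓝 0) := by
    simpa using tendsto_log_atTop.inv_tendsto_atTop.const_mul (2 / log 2)
  refine tendsto_of_tendsto_of_tendsto_of_le_of_le' tendsto_const_nhds hbound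
    (Eventually.of_forall fun x => by positivity) ?_
  filter_upwards [eventually_mul_div_log_le_primePi, eventually_gt_atTop 1] with x hπ hx
  have hlogx : 0 < log x := log_pos hx
  calc (primePi (x / log x ^ 2) : ℝ) / primePi x
      ≤ (x / log x ^ 2) / (log 2 / 2 * x / log x) :=
        div_le_div₀ (by positivity) (primePi_le_self (by positivity)) (by positivity) hπ
    _ = 2 / log 2 * (log x)⁻¹ := by field_simp

theorem chebyshevPsi_pos {x y : ℝ} (hy : 1 < y) (hyx : y ≤ x) (hπ : primePi y < primePi x) :
    0 < chebyshevPsi x := by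
  have hgap : (0 : ℝ) < primePi x - primePi y := sub_pos.mpr (by exact_mod_cast hπ)
  rw [chebyshevPsi_eq_chebyshevPsiOf]
  exact (mul_pos hgap (log_pos hy)).trans_le (primePiOf_sub_mul_log_le _ hy.le hyx)

theorem le_chebyshevPsiOf_div_chebyshevPsi {S : Set ℕ} (hS : ∀ p ∈ S, p.Prime) {x y : ℝ}
    (hy : 1 < y) (hyx : y ≤ x) (hπ : primePi y < primePi x) :
    ((primePiOf S x : ℝ) / primePi x - primePi y / primePi x) * (log y / log x)
      ≤ chebyshevPsiOf S x / chebyshevPsi x := by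
  have hψ := chebyshevPsi_pos hy hyx hπ
  have hπx : (0 : ℝ) < primePi x := by exact_mod_cast hπ.pos
  have hlogx : 0 < log x := log_pos (hy.trans_le hyx)
  have hπS : (primePiOf S y : ℝ) ≤ primePi y := by
    rw [primePi_eq_primePiOf]; exact_mod_cast primePiOf_mono hS (by linarith)
  have hψ_le : chebyshevPsi x ≤ primePi x * log x := by
    rw [chebyshevPsi_eq_chebyshevPsiOf, primePi_eq_primePiOf]
    exact chebyshevPsiOf_le_primePiOf_mul_log _ (by linarith)
  have hψS := primePiOf_sub_mul_log_le S hy.le hyx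
  calc ((primePiOf S x : ℝ) / primePi x - primePi y / primePi x) * (log y / log x)
      = (primePiOf S x - primePi y) * log y / (primePi x * log x) := by field_simp
    _ ≤ chebyshevPsiOf S x / (primePi x * log x) := by
        gcongr
        exact (mul_le_mul_of_nonneg_right (by linarith) (log_pos hy).le).trans hψS
    _ ≤ chebyshevPsiOf S x / chebyshevPsi x :=
        div_le_div_of_nonneg_left (chebyshevPsiOf_nonneg S x) hψ hψ_le

theorem chebyshevPsiOf_div_chebyshevPsi_le (S : Set ℕ) {x y : ℝ}
    (hy : 1 < y) (hyx : y ≤ x) (hπ : primePi y < primePi x) :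
    chebyshevPsiOf S x / chebyshevPsi x
      ≤ ((primePiOf S x : ℝ) / primePi x) / ((1 - primePi y / primePi x) * (log y / log x)) := by
  have hψ := chebyshevPsi_pos hy hyx hπ
  have hπx : (0 : ℝ) < primePi x := by exact_mod_cast hπ.pos
  have hgap : (0 : ℝ) < primePi x - primePi y := sub_pos.mpr (by exact_mod_cast hπ)
  have hlogx : 0 < log x := log_pos (hy.trans_le hyx)
  have hlogy : 0 < log y := log_pos hy
  have hψ_ge : (primePi x - primePi y) * log y ≤ chebyshevPsi x := by
    rw [chebyshevPsi_eq_chebyshevPsiOf, primePi_eq_primePiOf]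
    exact primePiOf_sub_mul_log_le _ hy.le hyx
  calc chebyshevPsiOf S x / chebyshevPsi x
      ≤ primePiOf S x * log x / chebyshevPsi x := by
        gcongr; exact chebyshevPsiOf_le_primePiOf_mul_log S (by linarith)
    _ ≤ primePiOf S x * log x / ((primePi x - primePi y) * log y) := by
        gcongr
    _ = ((primePiOf S x : ℝ) / primePi x) / ((1 - primePi y / primePi x) * (log y / log x)) := by
        field_simp

/-- **Transfer of natural density from π-normalization to ψ-normalization.**
If `S` is a set of primes and `π_S(x)/π(x) → α` as `x → ∞`, then
`ψ_S(x)/ψ(x) → α` as `x → ∞`. -/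
theorem stmt2 (S : Set ℕ) (hS : ∀ p ∈ S, p.Prime) (α : ℝ)
    (h : Filter.Tendsto (fun x : ℝ => (primePiOf S x : ℝ) / (primePi x : ℝ))
      Filter.atTop (nhds α)) :
    Filter.Tendsto (fun x : ℝ => chebyshevPsiOf S x / chebyshevPsi x)
      Filter.atTop (nhds α) := by
  have hratio := tendsto_primePi_div_log_sq_div_primePi
  have hlog := tendsto_log_div_log_sq_div_log
  have hlower := (h.sub hratio).mul hlog
  have hupper := h.div ((tendsto_const_nhds (x := (1 : ℝ))).sub hratio |>.mul hlog) (by norm_num)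
  rw [sub_zero, mul_one] at hlower
  rw [sub_zero, mul_one, div_one] at hupper
  have hgood : ∀ᶠ x : ℝ in atTop, 1 < x / log x ^ 2 ∧ x / log x ^ 2 ≤ x ∧
      primePi (x / log x ^ 2) < primePi x := by
    filter_upwards [eventually_one_lt_div_log_sq_le_self,
      hratio.eventually (eventually_lt_nhds one_pos),
      eventually_mul_div_log_le_primePi, eventually_gt_atTop 1] with x ⟨hy, hyx⟩ hlt hπ hx
    refine ⟨hy, hyx, ?_⟩
    have : (0 : ℝ) < primePi x := hπ.trans_lt' (by have := log_pos hx; positivity)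
    exact_mod_cast (div_lt_one this).mp hlt
  refine tendsto_of_tendsto_of_tendsto_of_le_of_le' hlower hupper ?_ ?_
  · filter_upwards [hgood] with x ⟨hy, hyx, hπ⟩
    exact le_chebyshevPsiOf_div_chebyshevPsi hS hy hyx hπ
  · filter_upwards [hgood] with x ⟨hy, hyx, hπ⟩
    exact chebyshevPsiOf_div_chebyshevPsi_le S hy hyx hπ
end

section
/- Let p_i denote the i-th prime number in increasing order (p_1 = 2, p_2 = 3, …). Let S ⊆ {1, 2, 3, …} and α ∈ ℝ, and suppose S has natural density α, i.e. #(S ∩ {1,…,ν})/ν → α as ν → ∞. Then the Dirichlet density of S equals α as well: lim_{s→1⁺} (Σ_{i∈S} p_i^{−s}) / (Σ_{i≥1} p_i^{−s}) = α. (For each real s > 1 both series converge, and the denominator tends to infinity as s → 1⁺, so the ratio is well defined near 1.) -/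
/-- The `i`-th prime in increasing order, 1-indexed: `nthPrime 1 = 2`,
`nthPrime 2 = 3`, …  (`Nat.nth Nat.Prime` is 0-indexed). -/
noncomputable def nthPrime (i : ℕ) : ℕ := Nat.nth Nat.Prime (i - 1)

/-!
With `A k = #(S ∩ [1, k])` and the nonnegative weights `w k = p_k^{-s} - p_{k+1}^{-s}`, Abel
summation gives `∑_{i ∈ S} p_i^{-s} = ∑ A k * w k` and `∑_{i ≥ 1} p_i^{-s} = ∑ k * w k`.
As `A k - α k = o(k)`, the numerator minus `α` times the denominator is at most a constant
plus `ε` times the denominator, and the denominator tends to infinity as `s → 1⁺` because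
`∑ 1/p` diverges. Only monotonicity, summability and this divergence of the weights are used.
-/

open Filter Set Topology

section AbelSummation

variable {g : ℕ → ℝ}

theorem Antitone.hasSum_sub_succ (hg : Antitone g) (hg0 : Tendsto g atTop (𝓝 0)) :
    HasSum (fun k => g k - g (k + 1)) (g 0) := by
  rw [hasSum_iff_tendsto_nat_of_nonneg (fun k => sub_nonneg.2 (hg k.le_succ))]
  simp only [Finset.sum_range_sub']
  simpa using tendsto_const_nhds.sub hg0

theorem Antitone.hasSum_indicator_Ici_sub_succ (hg : Antitone g) (hg0 : Tendsto g atTop (𝓝 0))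
    (i : ℕ) : HasSum ((Ici i).indicator fun k => g k - g (k + 1)) (g i) := by
  have hshift := Antitone.hasSum_sub_succ (g := fun k => g (k + i)) (fun a b h => hg (by omega))
    (hg0.comp (tendsto_add_atTop_nat i))
  have hzero : ∑ j ∈ Finset.range i, (Ici i).indicator (fun k => g k - g (k + 1)) j = 0 :=
    Finset.sum_eq_zero fun j hj => indicator_of_notMem (by simpa using hj) _
  have hterm : (fun k => (Ici i).indicator (fun k => g k - g (k + 1)) (k + i)) =
      fun k => g (k + i) - g (k + 1 + i) := by
    funext k
    rw [indicator_of_mem (by simp), add_right_comm]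
  rw [← hasSum_nat_add_iff' i, hzero, sub_zero, hterm]
  simpa using hshift

/-- Write `g i = ∑_{k ≥ i} (g k - g (k + 1))` and exchange the order of summation. -/
theorem Antitone.hasSum_ncard_mul_sub_succ (hg : Antitone g) (hg0 : Tendsto g atTop (𝓝 0))
    {T : Set ℕ} (hT : T ⊆ Ici 1) (hTg : Summable (T.indicator g)) :
    HasSum (fun k => ((T ∩ Icc 1 k).ncard : ℝ) * (g k - g (k + 1))) (∑' i, T.indicator g i) := by
  set F : ℕ → ℕ → ℝ := fun i k => (T ∩ Icc 1 k).indicator (fun _ => g k - g (k + 1)) i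
  have hrow : ∀ i, HasSum (F i) (T.indicator g i) := by
    intro i
    by_cases hi : i ∈ T
    · convert hg.hasSum_indicator_Ici_sub_succ hg0 i using 1
      · ext k
        by_cases hik : i ≤ k <;> simp [F, indicator, hi, hik, (hT hi).out]
      · simp [hi]
    · simp [F, hi]
  have hcol : ∀ k, ∑' i, F i k = (T ∩ Icc 1 k).ncard * (g k - g (k + 1)) := by
    intro k
    have hfin : (T ∩ Icc 1 k).Finite := (finite_Icc 1 k).inter_of_right T
    change ∑' i, (T ∩ Icc 1 k).indicator _ i = _
    rw [← hfin.coe_toFinset, ← sum_eq_tsum_indicator, Finset.sum_const, nsmul_eq_mul,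
      ncard_coe_finset]
  have hcol_summable : ∀ k, Summable fun i => F i k := fun k =>
    summable_of_ne_finset_zero (s := ((finite_Icc 1 k).inter_of_right T).toFinset) fun i hi =>
      indicator_of_notMem (by simpa using hi) _
  have hF : Summable (Function.uncurry F) := by
    refine (summable_prod_of_nonneg fun p => ?_).2 ⟨fun i => (hrow i).summable, ?_⟩
    · exact indicator_nonneg (fun k _ => sub_nonneg.2 (hg (Nat.le_succ _))) _
    · simpa [(hrow _).tsum_eq] using hTg
  have hswap := hF.prod_symm.prod
  simp only [Function.uncurry, Prod.fst_swap, Prod.snd_swap, hcol] at hswap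
  have htsum : ∑' k, ((T ∩ Icc 1 k).ncard : ℝ) * (g k - g (k + 1)) = ∑' i, T.indicator g i := by
    simp_rw [← hcol, hF.tsum_comm' (fun i => (hrow i).summable) hcol_summable, (hrow _).tsum_eq]
  exact htsum ▸ hswap.hasSum

theorem Antitone.hasSum_natCast_mul_sub_succ (hg : Antitone g) (hgs : Summable g) :
    HasSum (fun k : ℕ => (k : ℝ) * (g k - g (k + 1))) (∑' i, (Ici 1).indicator g i) := by
  convert hg.hasSum_ncard_mul_sub_succ hgs.tendsto_atTop_zero subset_rfl (hgs.indicator _)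
    using 1
  funext k
  rw [inter_eq_right.2 Icc_subset_Ici_self, ← Finset.coe_Icc, ncard_coe_finset, Nat.card_Icc]
  simp

end AbelSummation

theorem isLittleO_sub_mul_of_tendsto_div {a : ℕ → ℝ} {α : ℝ}
    (h : Tendsto (fun k : ℕ => a k / k) atTop (𝓝 α)) :
    (fun k : ℕ => a k - α * k) =o[atTop] fun k : ℕ => (k : ℝ) := by
  refine (Asymptotics.isLittleO_iff_tendsto' ?_).2 ?_
  · filter_upwards [eventually_ne_atTop 0] with k hk hk0
    exact absurd (Nat.cast_eq_zero.1 hk0) hk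
  · refine (tendsto_sub_nhds_zero_iff.2 h).congr' ?_
    filter_upwards [eventually_ne_atTop 0] with k hk
    field_simp

theorem Antitone.abs_tsum_indicator_sub_mul_tsum_le {g : ℕ → ℝ} (hg : Antitone g)
    (hgs : Summable g) {S : Set ℕ} (hS : S ⊆ Ici 1) {α ε : ℝ} (hε : 0 ≤ ε) {M : ℕ}
    (hM : ∀ k ≥ M, |((S ∩ Icc 1 k).ncard : ℝ) - α * k| ≤ ε * k) :
    |∑' i, S.indicator g i - α * ∑' i, (Ici 1).indicator g i| ≤
      (∑ k ∈ Finset.range M, |((S ∩ Icc 1 k).ncard : ℝ) - α * k|) * g 0 +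
        ε * ∑' i, (Ici 1).indicator g i := by
  set E : ℕ → ℝ := fun k => ((S ∩ Icc 1 k).ncard : ℝ) - α * k
  set w : ℕ → ℝ := fun k => g k - g (k + 1)
  have hg0 := hgs.tendsto_atTop_zero
  have hw : ∀ k, 0 ≤ w k ∧ w k ≤ g 0 := fun k =>
    ⟨sub_nonneg.2 (hg (Nat.le_succ k)),
      by linarith [hg (Nat.zero_le k), hg.le_of_tendsto hg0 (k + 1)]⟩
  have hD := hg.hasSum_natCast_mul_sub_succ hgs
  have hdiff : HasSum (fun k => E k * w k)
      (∑' i, S.indicator g i - α * ∑' i, (Ici 1).indicator g i) := by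
    simpa only [E, w, sub_mul, mul_assoc] using
      (hg.hasSum_ncard_mul_sub_succ hg0 hS (hgs.indicator S)).sub (hD.mul_left α)
  have hbound : HasSum (fun k => (if k < M then |E k| * g 0 else 0) + ε * (k * w k))
      ((∑ k ∈ Finset.range M, |E k|) * g 0 + ε * ∑' i, (Ici 1).indicator g i) := by
    have hfin := hasSum_sum_of_ne_finset_zero (s := Finset.range M)
      (f := fun k => if k < M then |E k| * g 0 else 0) (L := .unconditional ℕ)
      fun k hk => if_neg (by simpa using hk)
    rw [Finset.sum_congr rfl fun k hk => if_pos (Finset.mem_range.1 hk)] at hfin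
    rw [Finset.sum_mul]
    exact hfin.add (hD.mul_left ε)
  rw [← hdiff.tsum_eq, ← Real.norm_eq_abs]
  refine tsum_of_norm_bounded hbound fun k => ?_
  rw [Real.norm_eq_abs, abs_mul, abs_of_nonneg (hw k).1]
  split_ifs with hk
  · have : 0 ≤ ε * (k * w k) := by have := (hw k).1; positivity
    linarith [mul_le_mul_of_nonneg_left (hw k).2 (abs_nonneg (E k))]
  · have := mul_le_mul_of_nonneg_right (hM k (not_lt.1 hk)) (hw k).1
    linarith

theorem tendsto_tsum_indicator_div_of_tendsto_ncard_div {ι : Type*} {l : Filter ι}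
    {g : ι → ℕ → ℝ} {S : Set ℕ} (hS : S ⊆ Ici 1) {α : ℝ}
    (hdens : Tendsto (fun ν : ℕ => ((S ∩ Icc 1 ν).ncard : ℝ) / ν) atTop (𝓝 α))
    (hanti : ∀ᶠ t in l, Antitone (g t)) (hsum : ∀ᶠ t in l, Summable (g t))
    (hbdd : IsBoundedUnder (· ≤ ·) l fun t => g t 0)
    (hD : Tendsto (fun t => ∑' i, (Ici 1).indicator (g t) i) l atTop) :
    Tendsto (fun t => (∑' i, S.indicator (g t) i) / ∑' i, (Ici 1).indicator (g t) i) l (𝓝 α) := by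
  obtain ⟨B, hB⟩ := hbdd
  rw [Metric.tendsto_nhds]
  intro ε hε
  obtain ⟨M, hM⟩ := eventually_atTop.1
    ((isLittleO_sub_mul_of_tendsto_div hdens).def (half_pos hε))
  set C := ∑ k ∈ Finset.range M, |((S ∩ Icc 1 k).ncard : ℝ) - α * k|
  have hC : 0 ≤ C := Finset.sum_nonneg fun k _ => abs_nonneg _
  have hsmall : Tendsto (fun t => C * B / ∑' i, (Ici 1).indicator (g t) i) l (𝓝 0) :=
    tendsto_const_nhds.div_atTop hD
  filter_upwards [hanti, hsum, hB, hD.eventually_gt_atTop 0,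
    hsmall.eventually (gt_mem_nhds (half_pos hε))] with t hanti hsum hB hDpos hsmall
  have hest := hanti.abs_tsum_indicator_sub_mul_tsum_le hsum hS (half_pos hε).le
    fun k hk => by simpa using hM k hk
  change _ ≤ C * g t 0 + _ at hest
  rw [div_lt_iff₀ hDpos] at hsmall
  rw [Real.dist_eq, div_sub' hDpos.ne', mul_comm _ α, abs_div, abs_of_pos hDpos,
    div_lt_iff₀ hDpos]
  linarith [mul_le_mul_of_nonneg_left (show g t 0 ≤ B from hB) hC]

theorem tendsto_tsum_atTop_of_not_summable {ι : Type*} {l : Filter ι} {f : ι → ℕ → ℝ}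
    {f₀ : ℕ → ℝ} (hf : ∀ᶠ t in l, 0 ≤ f t) (hfs : ∀ᶠ t in l, Summable (f t))
    (hlim : ∀ i, Tendsto (fun t => f t i) l (𝓝 (f₀ i))) (hf₀ : 0 ≤ f₀) (hns : ¬Summable f₀) :
    Tendsto (fun t => ∑' i, f t i) l atTop := by
  refine tendsto_atTop.2 fun b => ?_
  obtain ⟨n, hn⟩ :=
    (((not_summable_iff_tendsto_nat_atTop_of_nonneg hf₀).1 hns).eventually_gt_atTop b).exists
  have hpartial : Tendsto (fun t => ∑ i ∈ Finset.range n, f t i) l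
      (𝓝 (∑ i ∈ Finset.range n, f₀ i)) := tendsto_finsetSum _ fun i _ => hlim i
  filter_upwards [hf, hfs, hpartial.eventually (lt_mem_nhds hn)] with t hf hfs hlt
  exact hlt.le.trans (hfs.sum_le_tsum _ fun i _ => hf i)

theorem nthPrime_monotone : Monotone nthPrime := fun _ _ h =>
  Nat.nth_monotone Nat.infinite_setOfPred_prime (Nat.sub_le_sub_right h 1)

theorem succ_le_nthPrime (i : ℕ) : i + 1 ≤ nthPrime i := by
  have := Nat.add_two_le_nth_prime (i - 1)
  unfold nthPrime
  omega

theorem antitone_nthPrime_rpow_neg {s : ℝ} (hs : 0 ≤ s) :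
    Antitone fun i => (nthPrime i : ℝ) ^ (-s) := fun _ _ h =>
  Real.rpow_le_rpow_of_nonpos (by exact_mod_cast (Nat.prime_nth_prime _).pos)
    (by exact_mod_cast nthPrime_monotone h) (neg_nonpos.2 hs)

theorem summable_nthPrime_rpow_neg {s : ℝ} (hs : 1 < s) :
    Summable fun i => (nthPrime i : ℝ) ^ (-s) := by
  refine ((summable_nat_add_iff 1).2 (Real.summable_nat_rpow.2 (neg_lt_neg hs))).of_nonneg_of_le
    (fun i => by positivity) fun i => ?_
  exact Real.rpow_le_rpow_of_nonpos (by positivity) (by exact_mod_cast succ_le_nthPrime i)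
    (by linarith)

theorem not_summable_inv_nth_prime : ¬Summable fun n => ((Nat.nth Nat.Prime n : ℕ) : ℝ)⁻¹ := by
  have hinf := Nat.infinite_setOfPred_prime
  let e : ℕ ≃ Nat.Primes := Equiv.ofBijective (fun n => ⟨_, Nat.prime_nth_prime n⟩)
    ⟨fun m n h => Nat.nth_injective hinf (congrArg Subtype.val h), fun p => by
      obtain ⟨n, hn⟩ : p.1 ∈ range (Nat.nth Nat.Prime) :=
        (Nat.range_nth_of_infinite hinf).symm ▸ p.2
      exact ⟨n, Subtype.ext hn⟩⟩
  exact fun h =>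
    Nat.Primes.not_summable_one_div (e.summable_iff.1 (h.congr fun n => (one_div _).symm))

theorem tendsto_tsum_nthPrime_rpow_neg_atTop :
    Tendsto (fun s : ℝ => ∑' i, (Ici 1).indicator (fun i => (nthPrime i : ℝ) ^ (-s)) i)
      (𝓝[>] 1) atTop := by
  refine tendsto_tsum_atTop_of_not_summable
    (f₀ := (Ici 1).indicator fun i => (nthPrime i : ℝ) ^ (-1 : ℝ))
    (Eventually.of_forall fun s => indicator_nonneg (fun i _ => by positivity))
    (eventually_mem_nhdsWithin.mono fun s hs => (summable_nthPrime_rpow_neg hs).indicator _)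
    (fun i => ?_) (indicator_nonneg fun i _ => by positivity) ?_
  · by_cases hi : i ∈ Ici 1
    · simp only [indicator_of_mem hi]
      have hp : (nthPrime i : ℝ) ≠ 0 := by exact_mod_cast (Nat.prime_nth_prime _).ne_zero
      exact ((continuous_const.rpow continuous_neg fun _ => Or.inl hp).tendsto 1).mono_left
        nhdsWithin_le_nhds
    · simp only [indicator_of_notMem hi, tendsto_const_nhds]
  · rw [← summable_nat_add_iff 1]
    simpa [nthPrime, Real.rpow_neg_one] using not_summable_inv_nth_prime

open Classical in
/-- **Natural density implies Dirichlet density** (for the norms `N_i = p_i`).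
Let `S` be a set of positive integers with natural density `α`, i.e.
`#(S ∩ {1,…,ν})/ν → α`.  Then for every `s > 1` the series `Σ_{i∈S} p_i^{−s}`
and `Σ_{i≥1} p_i^{−s}` converge, the denominator tends to `∞` as `s → 1⁺`, and
the Dirichlet density of `S` equals `α`:
`(Σ_{i∈S} p_i^{−s})/(Σ_{i≥1} p_i^{−s}) → α` as `s → 1⁺`. -/
theorem stmt5 (S : Set ℕ) (hS : ∀ i ∈ S, 1 ≤ i) (α : ℝ)
    (hdens : Filter.Tendsto
      (fun ν : ℕ => ((S ∩ Set.Icc 1 ν).ncard : ℝ) / ν) Filter.atTop (nhds α)) :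
    (∀ s : ℝ, 1 < s →
      Summable (fun i : ℕ => if i ∈ S then ((nthPrime i : ℝ)) ^ (-s) else 0) ∧
      Summable (fun i : ℕ => if 1 ≤ i then ((nthPrime i : ℝ)) ^ (-s) else 0)) ∧
    Filter.Tendsto
      (fun s : ℝ => ∑' i : ℕ, if 1 ≤ i then ((nthPrime i : ℝ)) ^ (-s) else 0)
      (nhdsWithin 1 (Set.Ioi 1)) Filter.atTop ∧
    Filter.Tendsto
      (fun s : ℝ =>
        (∑' i : ℕ, if i ∈ S then ((nthPrime i : ℝ)) ^ (-s) else 0) /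
        (∑' i : ℕ, if 1 ≤ i then ((nthPrime i : ℝ)) ^ (-s) else 0))
      (nhdsWithin 1 (Set.Ioi 1)) (nhds α) := by
  -- `rfl`: `Set.indicator` decides membership classically, as the `open Classical` statement does.
  have hS_ind : ∀ s : ℝ, (fun i : ℕ => if i ∈ S then (nthPrime i : ℝ) ^ (-s) else 0) =
      S.indicator fun i => (nthPrime i : ℝ) ^ (-s) := fun s => rfl
  have hIci_ind : ∀ s : ℝ, (fun i : ℕ => if 1 ≤ i then (nthPrime i : ℝ) ^ (-s) else 0) =
      (Ici 1).indicator fun i => (nthPrime i : ℝ) ^ (-s) := fun s => by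
    ext i
    simp [indicator_apply]
  simp only [hS_ind, hIci_ind]
  have hbdd : ∀ s ∈ Ioi (1 : ℝ), (nthPrime 0 : ℝ) ^ (-s) ≤ 1 := fun s hs =>
    Real.rpow_le_one_of_one_le_of_nonpos (by exact_mod_cast (Nat.prime_nth_prime _).one_le)
      (by linarith [hs.out])
  refine ⟨fun s hs => ⟨(summable_nthPrime_rpow_neg hs).indicator _,
    (summable_nthPrime_rpow_neg hs).indicator _⟩, tendsto_tsum_nthPrime_rpow_neg_atTop, ?_⟩
  exact tendsto_tsum_indicator_div_of_tendsto_ncard_div hS hdens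
    (eventually_mem_nhdsWithin.mono fun s hs =>
      antitone_nthPrime_rpow_neg (by linarith [hs.out]))
    (eventually_mem_nhdsWithin.mono fun s hs => summable_nthPrime_rpow_neg hs)
    ⟨1, eventually_map.2 (eventually_mem_nhdsWithin.mono hbdd)⟩
    tendsto_tsum_nthPrime_rpow_neg_atTop
end

section
/- Let p be a prime number, G a group, g ∈ G an element of finite order m with m dividing p − 1, and g₀ ∈ G. Let σ : G → G be any function and let T : 𝔽_p[G] → 𝔽_p[G] be the 𝔽_p-linear map sending the basis element corresponding to each h ∈ G to the basis element corresponding to σ(h). Suppose that T(ε)·g₀ = g₀·ε holds in 𝔽_p[G] for every idempotent ε lying in the 𝔽_p-linear span of the basis elements {1, g, g², …, g^{m−1}} (the subalgebra of 𝔽_p[G] spanned by the powers of g). Then σ(g) = g₀·g·g₀^{−1} in G. -/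
/-!
Put `u = g` in `𝔽_p[G]`, so `u ^ m = 1`, and let `ζ ∈ 𝔽_p` be a primitive `m`-th root of unity.
The averages `e_j = m⁻¹ ∑_{k<m} (ζ ^ j u) ^ k` are idempotents in the span of the powers of `u`;
they sum to `1` and satisfy `u e_j = ζ⁻ʲ e_j`, so `u = ∑_j ζ⁻ʲ e_j`. The linear maps
`x ↦ T(x) g₀` and `x ↦ g₀ x` agree on every `e_j`, hence at `u`: `σ(g) g₀ = g₀ g`.
-/

open Finset

section PowAverage

variable (K : Type*) {A : Type*} [Field K] [Ring A] [Algebra K A]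

/-- When `x ^ m = 1` and `m` is invertible in `K`, this is the idempotent projecting onto the
elements fixed by left multiplication with `x`. -/
def powAverage (m : ℕ) (x : A) : A := (m : K)⁻¹ • ∑ k ∈ range m, x ^ k

variable {K} {m : ℕ}

theorem mul_powAverage_of_pow_eq_one {x : A} (hx : x ^ m = 1) :
    x * powAverage K m x = powAverage K m x := by
  have h := mul_geom_sum x m
  rw [hx, sub_self, sub_mul, one_mul, sub_eq_zero] at h
  rw [powAverage, mul_smul_comm, h]

theorem pow_mul_powAverage_of_pow_eq_one {x : A} (hx : x ^ m = 1) (k : ℕ) :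
    x ^ k * powAverage K m x = powAverage K m x := by
  induction k with
  | zero => rw [pow_zero, one_mul]
  | succ k ih => rw [pow_succ', mul_assoc, ih, mul_powAverage_of_pow_eq_one hx]

theorem isIdempotentElem_powAverage {x : A} (hx : x ^ m = 1) (hm : (m : K) ≠ 0) :
    IsIdempotentElem (powAverage K m x) := by
  calc (m : K)⁻¹ • (∑ k ∈ range m, x ^ k) * powAverage K m x
      = (m : K)⁻¹ • ∑ _k ∈ range m, powAverage K m x := by
        simp only [smul_mul_assoc, sum_mul, pow_mul_powAverage_of_pow_eq_one hx]
    _ = powAverage K m x := by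
        rw [sum_const, card_range, ← Nat.cast_smul_eq_nsmul K, smul_smul, inv_mul_cancel₀ hm,
          one_smul]

theorem powAverage_smul_mem_span (c : K) (u : A) :
    powAverage K m (c • u) ∈ Submodule.span K (Set.range fun k : Fin m => u ^ (k : ℕ)) := by
  refine Submodule.smul_mem _ _ (Submodule.sum_mem _ fun k hk => ?_)
  rw [smul_pow]
  exact Submodule.smul_mem _ _ (Submodule.subset_span ⟨⟨k, mem_range.mp hk⟩, rfl⟩)

theorem IsPrimitiveRoot.geom_sum_pow_eq_zero {R : Type*} [CommRing R] [IsDomain R] {ζ : R}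
    (hζ : IsPrimitiveRoot ζ m) {k : ℕ} (hk0 : k ≠ 0) (hk : k < m) :
    ∑ j ∈ range m, (ζ ^ k) ^ j = 0 := by
  refine eq_zero_of_ne_zero_of_mul_left_eq_zero
    (sub_ne_zero_of_ne (hζ.pow_ne_one_of_pos_of_lt hk0 hk).symm) ?_
  rw [mul_neg_geom_sum, pow_right_comm, hζ.pow_eq_one, one_pow, sub_self]

theorem smul_pow_eq_one {c : K} {u : A} (hc : c ^ m = 1) (hu : u ^ m = 1) : (c • u) ^ m = 1 := by
  rw [smul_pow, hc, hu, one_smul]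

theorem IsPrimitiveRoot.pow_pow_eq_one {ζ : K} (hζ : IsPrimitiveRoot ζ m) (j : ℕ) :
    (ζ ^ j) ^ m = 1 := by
  rw [pow_right_comm, hζ.pow_eq_one, one_pow]

variable [NeZero m] {ζ : K}

theorem sum_powAverage_pow_smul (hζ : IsPrimitiveRoot ζ m) (u : A) :
    ∑ j ∈ range m, powAverage K m (ζ ^ j • u) = 1 := by
  have hm : (m : K) ≠ 0 := hζ.neZero'.out
  calc ∑ j ∈ range m, powAverage K m (ζ ^ j • u)
      = (m : K)⁻¹ • ∑ k ∈ range m, (∑ j ∈ range m, (ζ ^ k) ^ j) • u ^ k := by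
        simp only [powAverage, smul_pow, ← smul_sum, sum_smul]
        rw [sum_comm]
        simp only [pow_right_comm]
    _ = (m : K)⁻¹ • ((m : K) • u ^ 0) := by
        rw [sum_eq_single_of_mem 0 (mem_range.mpr (NeZero.pos m)) fun k hk hk0 => by
          rw [hζ.geom_sum_pow_eq_zero hk0 (mem_range.mp hk), zero_smul]]
        simp
    _ = 1 := by rw [smul_smul, inv_mul_cancel₀ hm, one_smul, pow_zero]

theorem eq_sum_inv_pow_smul_powAverage (hζ : IsPrimitiveRoot ζ m) {u : A} (hu : u ^ m = 1) :
    u = ∑ j ∈ range m, (ζ ^ j)⁻¹ • powAverage K m (ζ ^ j • u) := by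
  have hζ0 : ζ ≠ 0 := hζ.ne_zero (NeZero.ne m)
  have mul_powAverage_eq (j : ℕ) :
      u * powAverage K m (ζ ^ j • u) = (ζ ^ j)⁻¹ • powAverage K m (ζ ^ j • u) := by
    rw [eq_inv_smul_iff₀ (pow_ne_zero j hζ0), ← smul_mul_assoc,
      mul_powAverage_of_pow_eq_one (smul_pow_eq_one (hζ.pow_pow_eq_one j) hu)]
  calc u = u * ∑ j ∈ range m, powAverage K m (ζ ^ j • u) := by
        rw [sum_powAverage_pow_smul hζ, mul_one]
    _ = _ := by rw [mul_sum]; exact sum_congr rfl fun j _ => mul_powAverage_eq j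

theorem mem_span_isIdempotentElem_of_pow_eq_one (hζ : IsPrimitiveRoot ζ m) {u : A}
    (hu : u ^ m = 1) :
    u ∈ Submodule.span K {e | e ∈ Submodule.span K (Set.range fun k : Fin m => u ^ (k : ℕ)) ∧
      IsIdempotentElem e} := by
  have hmem : ∀ j, powAverage K m (ζ ^ j • u) ∈
      {e | e ∈ Submodule.span K (Set.range fun k : Fin m => u ^ (k : ℕ)) ∧ IsIdempotentElem e} :=
    fun j => ⟨powAverage_smul_mem_span _ u, isIdempotentElem_powAverage
      (smul_pow_eq_one (hζ.pow_pow_eq_one j) hu) hζ.neZero'.out⟩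
  have hsum := Submodule.sum_mem _ fun j (_ : j ∈ range m) =>
    Submodule.smul_mem _ (ζ ^ j)⁻¹ (Submodule.subset_span (R := K) (hmem j))
  rwa [← eq_sum_inv_pow_smul_powAverage hζ hu] at hsum

end PowAverage

/-- **Extracting conjugation from the action on idempotents (Uchida's Claim 1).**
Let `p` be prime, `g ∈ G` of finite order `m` with `m ∣ p − 1`, `g₀ ∈ G`,
`σ : G → G` a function, and `T : 𝔽_p[G] →ₗ 𝔽_p[G]` the `𝔽_p`-linear map sending
the basis element at `h` to the basis element at `σ(h)`.  If
`T(ε)·g₀ = g₀·ε` for every idempotent `ε` in the `𝔽_p`-span of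
`{1, g, …, g^{m−1}}`, then `σ(g) = g₀·g·g₀⁻¹`. -/
theorem stmt8 (p m : ℕ) [Fact p.Prime] (hm : 0 < m) (hdvd : m ∣ p - 1)
    {G : Type} [Group G] (g g₀ : G) (hg : orderOf g = m)
    (σ : G → G)
    (T : MonoidAlgebra (ZMod p) G →ₗ[ZMod p] MonoidAlgebra (ZMod p) G)
    (hT : ∀ h : G, T (MonoidAlgebra.of (ZMod p) G h) = MonoidAlgebra.of (ZMod p) G (σ h))
    (hidem : ∀ ε : MonoidAlgebra (ZMod p) G,
      ε ∈ Submodule.span (ZMod p)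
        (Set.range fun k : Fin m => MonoidAlgebra.of (ZMod p) G (g ^ (k : ℕ))) →
      ε * ε = ε →
      T ε * MonoidAlgebra.of (ZMod p) G g₀ = MonoidAlgebra.of (ZMod p) G g₀ * ε) :
    σ g = g₀ * g * g₀⁻¹ := by
  have : NeZero m := ⟨hm.ne'⟩
  have : NeZero (p - 1) := ⟨Nat.sub_ne_zero_of_lt (Fact.out : p.Prime).one_lt⟩
  obtain ⟨ζ, hζ⟩ := (HasEnoughRootsOfUnity.of_dvd (ZMod p) hdvd).exists_primitiveRoot
  set of := MonoidAlgebra.of (ZMod p) G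
  have hgm : of g ^ m = 1 := by rw [← map_pow, ← hg, pow_orderOf_eq_one, map_one]
  simp only [map_pow] at hidem
  have key : T (of g) * of g₀ = of g₀ * of g :=
    LinearMap.eqOn_span' (f := LinearMap.mulRight (ZMod p) (of g₀) ∘ₗ T)
      (g := LinearMap.mulLeft (ZMod p) (of g₀)) (fun e he => hidem e he.1 he.2)
      (mem_span_isIdempotentElem_of_pow_eq_one hζ hgm)
  rw [hT, ← map_mul, ← map_mul] at key
  exact eq_mul_inv_of_mul_eq (MonoidAlgebra.of_injective key)
end

section
/- Let G be a finite group and p a prime number. The second group cohomology of G with coefficients in the group algebra 𝔽_p[G], where G acts by left multiplication (the left regular representation), vanishes: H²(G, 𝔽_p[G]) = 0. -/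
/-!
For finite `G`, the left regular representation `k[G]` is the representation coinduced from the
trivial subgroup, so Shapiro's lemma gives `Hⁿ(G, k[G]) ≅ Hⁿ(1, k)`, which vanishes for `n ≥ 1`.
-/

open CategoryTheory groupCohomology

universe u

section

variable (k G : Type u) [CommRing k] [Group G]

lemma Representation.coindV_bot_eq_top {A : Type u} [AddCommGroup A] [Module k A]
    (ρ : Representation k (⊥ : Subgroup G) A) :
    Representation.coindV (⊥ : Subgroup G).subtype ρ = ⊤ := by
  ext f
  simp [Subsingleton.elim _ (1 : (⊥ : Subgroup G))]

/-- Coinduced functions `G → k` act by right translation, so `x ∈ k[G]` corresponds to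
`h ↦ x.coeff h⁻¹`. -/
noncomputable def Representation.leftRegularEquivCoindBot [Finite G] :
    (Representation.leftRegular k G).Equiv
      (Representation.coind (⊥ : Subgroup G).subtype (Representation.trivial k _ k)) :=
  .mk (MonoidAlgebra.coeffLinearEquiv k ≪≫ₗ Finsupp.linearEquivFunOnFinite k k G ≪≫ₗ
      LinearEquiv.funCongrLeft k k (Equiv.inv G) ≪≫ₗ
      (LinearEquiv.ofTop _ (Representation.coindV_bot_eq_top k G _)).symm)
    fun g => by
      refine LinearMap.ext fun x => Subtype.ext <| funext fun h => ?_
      change (Representation.leftRegular k G g x).coeff h⁻¹ = x.coeff (h * g)⁻¹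
      simp [mul_inv_rev]

noncomputable def Rep.leftRegularIsoCoindBot [Finite G] :
    Rep.leftRegular k G ≅ Rep.coind (⊥ : Subgroup G).subtype (Rep.trivial k _ k) :=
  Rep.mkIso (Representation.leftRegularEquivCoindBot k G)

lemma groupCohomology.isZero_leftRegular_succ [Finite G] (n : ℕ) :
    Limits.IsZero (groupCohomology (Rep.leftRegular k G) (n + 1)) :=
  (isZero_groupCohomology_succ_of_subsingleton _ n).of_iso <|
    (functor k G (n + 1)).mapIso (Rep.leftRegularIsoCoindBot k G) ≪≫ coindIso _ (n + 1)

end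

theorem stmt10_general (p : ℕ) (G : Type) [Group G] [Finite G] :
    Subsingleton (groupCohomology (Rep.leftRegular (ZMod p) G) 2) :=
  ModuleCat.subsingleton_of_isZero (isZero_leftRegular_succ (ZMod p) G 1)

/-- **Vanishing of `H²(G, 𝔽_p[G])` (an instance of Shapiro's lemma).**
Let `G` be a finite group and `p` a prime.  The second group cohomology of `G`
with coefficients in the left regular representation `𝔽_p[G]` (with `G` acting
by left multiplication on basis elements) vanishes. -/
theorem stmt10 (p : ℕ) (hp : p.Prime) (G : Type) [Group G] [Finite G] :
    Subsingleton (groupCohomology (Rep.leftRegular (ZMod p) G) 2) :=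
  stmt10_general p G
end
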